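/- For every integer n ≥ 4 and every real μ ≥ 1, there exists a unique t ∈ (0,1) with scal_D(n,t)/(2n(n−1)−1) = μ. (Hence, since every eigenvalue of the Laplacian of the base SO(2n)/U(n) is a real number ≥ 1, each such eigenvalue is attained by scal(m_t)/(m−1) at exactly one instant t ∈ (0,1), giving infinitely many degeneracy instants of the canonical variation m_t on SO(2n)/Tⁿ accumulating at 0.) -/
import Mathlib


/-- Scalar curvature of the canonical variation `m_t` of the normal homogeneous
metric on the full flag manifold `SO(2n)/Tⁿ`. -/
noncomputable def scalD (n : ℕ) (t : ℝ) : ℝ :=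
  (-2 * n ^ 2 * t ^ 4 + 24 * n ^ 2 * t ^ 2 + 5 * n ^ 2
    + 4 * n * t ^ 4 - 24 * n * t ^ 2 + 2 * n) / (24 * t ^ 2)

/-- For `n ≥ 4` and every real `μ ≥ 1`, there is a unique `t ∈ (0,1)` with
`scal_D(n,t)/(2n(n-1)-1) = μ`.  Since every eigenvalue of the Laplacian of the
base `SO(2n)/U(n)` is `≥ 1`, each such eigenvalue is attained by
`scal(m_t)/(m-1)` at exactly one instant `t ∈ (0,1)`, giving infinitely many
degeneracy instants of `m_t` on `SO(2n)/Tⁿ` accumulating at `0`. -/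
theorem scalD_exists_unique_degeneracy (n : ℕ) (hn : 4 ≤ n) (μ : ℝ) (hμ : 1 ≤ μ) :
    ∃! t : ℝ, t ∈ Set.Ioo (0 : ℝ) 1 ∧ scalD n t / (2 * n * (n - 1) - 1) = μ := by
  have hN : (4:ℝ) ≤ (n:ℝ) := by exact_mod_cast hn
  set N : ℝ := (n:ℝ) with hNdef
  have hD : (0:ℝ) < 2 * N * (N - 1) - 1 := by nlinarith
  set D : ℝ := 2 * N * (N - 1) - 1 with hDdef
  have hμD : D ≤ μ * D := le_mul_of_one_le_left hD.le hμ
  -- strict monotonicity on (0,1]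
  have mono : ∀ s t : ℝ, 0 < s → s < t → t ≤ 1 → scalD n t < scalD n s := by
    intro s t hs hst ht1
    have ht : 0 < t := hs.trans hst
    unfold scalD
    rw [div_lt_div_iff₀ (by positivity) (by positivity)]
    have h1 : 0 < t ^ 2 - s ^ 2 := by nlinarith
    have h2 : 0 < s ^ 2 * t ^ 2 := by positivity
    have h3 : (0:ℝ) < 5 * N ^ 2 + 2 * N := by nlinarith
    have h4 : (0:ℝ) ≤ 2 * N ^ 2 - 4 * N := by nlinarith
    nlinarith [mul_pos h1 h3, mul_nonneg (mul_pos h1 h2).le h4]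
  -- the point t0
  set u : ℝ := (5 * N ^ 2 + 2 * N) / (24 * μ * D + 26 * N ^ 2) with hudef
  have hKpos : (0:ℝ) < 24 * μ * D + 26 * N ^ 2 := by nlinarith
  have hu0 : 0 < u := by
    apply div_pos _ hKpos; nlinarith
  have huK : (24 * μ * D + 26 * N ^ 2) * u = 5 * N ^ 2 + 2 * N := by
    rw [hudef]; field_simp
  have hu1 : u < 1 := by
    rw [hudef, div_lt_one hKpos]; nlinarith
  set t0 : ℝ := Real.sqrt u with ht0def
  have ht0sq : t0 ^ 2 = u := Real.sq_sqrt hu0.le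
  have ht0pos : 0 < t0 := Real.sqrt_pos.2 hu0
  have ht01 : t0 < 1 := by nlinarith
  have hf0 : μ * D ≤ scalD n t0 := by
    unfold scalD
    rw [le_div_iff₀ (by positivity)]
    have h4 : t0 ^ 4 = u ^ 2 := by rw [show t0 ^ 4 = (t0 ^ 2) ^ 2 by ring, ht0sq]
    rw [h4, ht0sq]
    nlinarith [huK, mul_nonneg (mul_nonneg hu0.le (sub_nonneg.2 hu1.le))
      (show (0:ℝ) ≤ 2 * N ^ 2 - 4 * N by nlinarith), mul_pos hu0 hD,
      mul_nonneg hu0.le (show (0:ℝ) ≤ 48 * N ^ 2 - 20 * N by nlinarith)]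
  have hf1 : scalD n 1 < μ * D := by
    unfold scalD
    rw [div_lt_iff₀ (by norm_num)]
    nlinarith
  have hcont : ContinuousOn (scalD n) (Set.Icc t0 1) := by
    unfold scalD
    apply ContinuousOn.div (by fun_prop) (by fun_prop)
    intro t ht
    have : 0 < t := ht0pos.trans_le ht.1
    positivity
  obtain ⟨t, htmem, hteq⟩ :=
    intermediate_value_Icc' ht01.le hcont ⟨hf1.le, hf0⟩
  have htpos : 0 < t := ht0pos.trans_le htmem.1
  have htne1 : t ≠ 1 := by
    intro h
    rw [h] at hteq
    exact hf1.ne hteq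
  have htlt1 : t < 1 := lt_of_le_of_ne htmem.2 htne1
  refine ⟨t, ⟨⟨htpos, htlt1⟩, ?_⟩, ?_⟩
  · rw [hteq, mul_div_assoc, div_self hD.ne', mul_one]
  · rintro s ⟨⟨hs0, hs1⟩, hseq⟩
    have hs : scalD n s = μ * D := by
      rwa [div_eq_iff hD.ne'] at hseq
    rcases lt_trichotomy s t with h | h | h
    · exfalso
      have := mono s t hs0 h htlt1.le
      rw [hteq, hs] at this
      exact lt_irrefl _ this
    · exact h
    · exfalso
      have := mono t s htpos h hs1.le
      rw [hteq, hs] at this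
      exact lt_irrefl _ this
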